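/- Let G be a graph and P = {a_1, …, a_k} a set of vertices inducing a path, each of degree 2 in G, with outside neighbors a_0 of a_1 and a_{k+1} of a_k. If a_0 = a_{k+1} or a_0 is adjacent to a_{k+1} (so P ∪ {a_0, a_{k+1}} induces a cycle), then eliminating the vertices of P first, in any order, extends to a minimum fill-in ordering of G. -/

import Mathlib

open SimpleGraph

attribute [local instance] Classical.propDecidable

variable {V : Type*} [Fintype V] [DecidableEq V]

/-- The elimination graph `G_x`: delete `x` and complete its neighborhood to a clique.
(The eliminated vertex is kept as an isolated vertex.) -/
def elimG (G : SimpleGraph V) (x : V) : SimpleGraph V where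
  Adj u v := u ≠ v ∧ u ≠ x ∧ v ≠ x ∧ (G.Adj u v ∨ (G.Adj x u ∧ G.Adj x v))
  symm := by
    constructor
    intro u v h
    obtain ⟨h1, h2, h3, h4⟩ := h
    refine ⟨h1.symm, h3, h2, ?_⟩
    rcases h4 with h | ⟨h4, h5⟩
    · exact Or.inl h.symm
    · exact Or.inr ⟨h5, h4⟩
  loopless := ⟨by intro v h; exact h.1 rfl⟩

/-- The deficiency `D(x)`: the set of unordered pairs of distinct, non-adjacent
neighbors of `x`. -/
noncomputable def deficiencyFinset (G : SimpleGraph V) (x : V) : Finset (Sym2 V) :=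
  ((Finset.univ ×ˢ Finset.univ : Finset (V × V)).filter
    (fun p => p.1 ≠ p.2 ∧ G.Adj x p.1 ∧ G.Adj x p.2 ∧ ¬ G.Adj p.1 p.2)).image
    (fun p => s(p.1, p.2))

/-- Successive elimination of a list of vertices. -/
def elimList : SimpleGraph V → List V → SimpleGraph V
  | G, [] => G
  | G, x :: xs => elimList (elimG G x) xs

/-- The fill-in of an elimination ordering given as a list: the total number of
edges added during the elimination process. -/
noncomputable def fillList : SimpleGraph V → List V → ℕ
  | _, [] => 0
  | G, x :: xs => (deficiencyFinset G x).card + fillList (elimG G x) xs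

/-- The set of fill edges added during the elimination process. -/
noncomputable def fillEdges : SimpleGraph V → List V → Finset (Sym2 V)
  | _, [] => ∅
  | G, x :: xs => deficiencyFinset G x ∪ fillEdges (elimG G x) xs

/-- A list is an (elimination) ordering if it enumerates every vertex exactly once. -/
def IsOrdering (L : List V) : Prop := L.Nodup ∧ ∀ v : V, v ∈ L

/-- The minimum fill-in `Φ(G)`. -/
noncomputable def minFillIn (G : SimpleGraph V) : ℕ :=
  sInf {n | ∃ L : List V, IsOrdering L ∧ fillList G L = n}

/-- A vertex is simplicial if its neighborhood is a clique. -/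
def IsSimplicial (G : SimpleGraph V) (x : V) : Prop :=
  ∀ a b, G.Adj x a → G.Adj x b → a ≠ b → G.Adj a b

/-- `a` and `b` are indistinguishable: equal closed neighborhoods. -/
def Indistinguishable (G : SimpleGraph V) (a b : V) : Prop :=
  a ≠ b ∧ insert a (G.neighborSet a) = insert b (G.neighborSet b)

/-- `a` and `b` are twins: equal open neighborhoods (hence non-adjacent). -/
def Twins (G : SimpleGraph V) (a b : V) : Prop :=
  a ≠ b ∧ G.neighborSet a = G.neighborSet b

/-- Chordality: no induced cycle of length at least 4, equivalently every cycle of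
length at least 4 has a chord. -/
def IsChordal (G : SimpleGraph V) : Prop :=
  ∀ n : ℕ, 4 ≤ n → ∀ f : ZMod n → V, Function.Injective f →
    ¬ (∀ i j : ZMod n, G.Adj (f i) (f j) ↔ (j = i + 1 ∨ i = j + 1))

/-- `T` is a triangulation of `G`: a set of non-edges whose addition makes `G` chordal. -/
def IsTriangulation (G : SimpleGraph V) (T : Finset (Sym2 V)) : Prop :=
  (∀ e ∈ T, ¬ e.IsDiag ∧ e ∉ G.edgeSet) ∧
    IsChordal (G ⊔ SimpleGraph.fromEdgeSet (↑T : Set (Sym2 V)))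

/-- A minimum triangulation. -/
def IsMinTriangulation (G : SimpleGraph V) (T : Finset (Sym2 V)) : Prop :=
  IsTriangulation G T ∧ ∀ T' : Finset (Sym2 V), IsTriangulation G T' → T.card ≤ T'.card

/-- The graph obtained from `G` by deleting the vertices in `S`
(deleted vertices are kept as isolated vertices). -/
def deleteSet (G : SimpleGraph V) (S : Set V) : SimpleGraph V where
  Adj u v := G.Adj u v ∧ u ∉ S ∧ v ∉ S
  symm := ⟨fun _ _ ⟨h, hu, hv⟩ => ⟨h.symm, hv, hu⟩⟩
  loopless := ⟨fun v h => G.loopless.irrefl v h.1⟩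

/-!
Let `n` be the length of the cycle `C` formed by the path together with `a 0` and `a (k + 1)`.
Eliminating a path vertex removes a degree-two vertex from what is left of `C` and adds at most
the one edge between its two neighbours, none once `C` has shrunk to a triangle. So eliminating
the path first, in any order, costs at most `n - 3` fill edges and leaves exactly `G` with the
path deleted, since `a 0` and `a (k + 1)` are already adjacent or equal.

Conversely, every cycle of length `m` in the filled graph of an ordering `M` has at least `m - 3`
chords. The chords of `C` meet the path, so they are not among the fill edges of `M` on `G` with
the path deleted, and those are fill edges of `M` on `G` as well. Hence the fill-in of `M` is at
least `n - 3` plus that of `G` with the path deleted, which the path-first ordering attains.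
-/

section Elimination

omit [Fintype V] [DecidableEq V]

variable {G H : SimpleGraph V}

theorem elimList_append (G : SimpleGraph V) (A B : List V) :
    elimList G (A ++ B) = elimList (elimList G A) B := by
  induction A generalizing G with
  | nil => rfl
  | cons x xs ih => exact ih (elimG G x)

theorem elimG_adj_of_adj {x u v : V} (h : G.Adj u v) (hu : u ≠ x) (hv : v ≠ x) :
    (elimG G x).Adj u v :=
  ⟨h.ne, hu, hv, Or.inl h⟩

theorem elimList_adj_of_adj {S : List V} {u v : V} (h : G.Adj u v) (hu : u ∉ S) (hv : v ∉ S) :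
    (elimList G S).Adj u v := by
  induction S generalizing G with
  | nil => exact h
  | cons x xs ih =>
    simp only [List.mem_cons, not_or] at hu hv
    exact ih (elimG_adj_of_adj h hu.1 hv.1) hu.2 hv.2

theorem elimG_adj_iff_of_not_adj {x y w : V} (hxy : ¬G.Adj x y) (hy : y ≠ x) :
    (elimG G x).Adj y w ↔ G.Adj y w ∧ w ≠ x := by
  refine ⟨fun ⟨_, _, hw, h⟩ => ⟨h.resolve_right fun h => hxy h.1, hw⟩,
    fun ⟨h, hw⟩ => ⟨h.ne, hy, hw, Or.inl h⟩⟩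

theorem elimG_adj_iff_of_adj {x y w : V} (hxy : G.Adj x y) :
    (elimG G x).Adj y w ↔ y ≠ w ∧ w ≠ x ∧ (G.Adj y w ∨ G.Adj x w) := by
  refine ⟨fun ⟨hyw, _, hw, h⟩ => ⟨hyw, hw, h.imp_right And.right⟩,
    fun ⟨hyw, hw, h⟩ => ⟨hyw, hxy.ne', hw, h.imp_right fun h => ⟨hxy, h⟩⟩⟩

theorem elimG_mono (h : G ≤ H) (x : V) : elimG G x ≤ elimG H x := by
  rintro u v ⟨huv, hu, hv, h' | ⟨hxu, hxv⟩⟩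
  exacts [⟨huv, hu, hv, Or.inl (h h')⟩, ⟨huv, hu, hv, Or.inr ⟨h hxu, h hxv⟩⟩]

theorem elimList_mono (h : G ≤ H) (S : List V) : elimList G S ≤ elimList H S := by
  induction S generalizing G H with
  | nil => exact h
  | cons x xs ih => exact ih (elimG_mono h x)

theorem elimG_eq_self {x : V} (hx : ∀ w, ¬G.Adj x w) : elimG G x = G := by
  ext u v
  refine ⟨fun ⟨_, _, _, h⟩ => h.resolve_right fun h' => hx u h'.1,
    fun h => ⟨h.ne, ?_, ?_, Or.inl h⟩⟩
  · rintro rfl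
    exact hx v h
  · rintro rfl
    exact hx u h.symm

theorem not_adj_elimG_self (x w : V) : ¬(elimG G x).Adj x w :=
  fun h => h.2.1 rfl

theorem not_adj_elimG {x y w : V} (hx : ∀ w, ¬G.Adj x w) : ¬(elimG G y).Adj x w := by
  rintro ⟨-, -, -, h | ⟨h, -⟩⟩
  exacts [hx w h, hx y h.symm]

theorem not_adj_elimList {x w : V} (hx : ∀ w, ¬G.Adj x w) (S : List V) :
    ¬(elimList G S).Adj x w := by
  induction S generalizing G with
  | nil => exact hx w
  | cons y ys ih => exact ih fun w => not_adj_elimG hx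

theorem deleteSet_adj {S : Set V} {u v : V} :
    (deleteSet G S).Adj u v ↔ G.Adj u v ∧ u ∉ S ∧ v ∉ S :=
  Iff.rfl

theorem not_adj_deleteSet {S : Set V} {x w : V} (hx : x ∈ S) : ¬(deleteSet G S).Adj x w :=
  fun h => h.2.1 hx

/-- The filled graph of an elimination ordering: `G` together with all its fill edges. -/
def fillGraph (G : SimpleGraph V) (M : List V) : SimpleGraph V where
  Adj u v := ∃ S, S <+: M ∧ (elimList G S).Adj u v
  symm := ⟨fun _ _ ⟨S, hS, h⟩ => ⟨S, hS, h.symm⟩⟩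
  loopless := ⟨fun _ ⟨_, _, h⟩ => h.ne rfl⟩

theorem fillGraph_adj {M : List V} {u v : V} :
    (fillGraph G M).Adj u v ↔ ∃ S, S <+: M ∧ (elimList G S).Adj u v :=
  Iff.rfl

theorem elimList_le_fillGraph {S M : List V} (hS : S <+: M) : elimList G S ≤ fillGraph G M :=
  fun _ _ h => fillGraph_adj.2 ⟨S, hS, h⟩

theorem fillGraph_mono (h : G ≤ H) (M : List V) : fillGraph G M ≤ fillGraph H M :=
  fun _ _ hadj =>
    let ⟨S, hS, hadj⟩ := fillGraph_adj.1 hadj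
    fillGraph_adj.2 ⟨S, hS, elimList_mono h S hadj⟩

theorem fillGraph_elimList_le (A M : List V) :
    fillGraph (elimList G A) M ≤ fillGraph G (A ++ M) := by
  intro u v h
  obtain ⟨S, hS, h⟩ := fillGraph_adj.1 h
  exact fillGraph_adj.2 ⟨A ++ S, (List.prefix_append_right_inj A).2 hS, by rwa [elimList_append]⟩

theorem fillGraph_cons_adj {x u v : V} {M : List V} :
    (fillGraph G (x :: M)).Adj u v ↔ G.Adj u v ∨ (fillGraph (elimG G x) M).Adj u v := by
  simp only [fillGraph_adj]
  constructor
  · rintro ⟨_ | ⟨y, S⟩, hS, h⟩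
    · exact Or.inl h
    · obtain ⟨rfl, hS'⟩ := List.cons_prefix_cons.1 hS
      exact Or.inr ⟨S, hS', h⟩
  · rintro (h | ⟨S, hS, h⟩)
    · exact ⟨[], List.nil_prefix, h⟩
    · exact ⟨x :: S, List.cons_prefix_cons.2 ⟨rfl, hS⟩, h⟩

theorem not_adj_fillGraph {x w : V} (hx : ∀ w, ¬G.Adj x w) (M : List V) :
    ¬(fillGraph G M).Adj x w :=
  fun h =>
    let ⟨S, _, h⟩ := fillGraph_adj.1 h
    not_adj_elimList hx S h

theorem IsOrdering.append_filter_not_mem {L M : List V} {S : Set V} (hM : IsOrdering M)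
    (hL : L.Nodup) (hLS : ∀ x, x ∈ L ↔ x ∈ S) :
    IsOrdering (L ++ M.filter fun v => v ∉ S) := by
  refine ⟨List.nodup_append.2 ⟨hL, hM.1.filter _, ?_⟩, fun v => ?_⟩
  · rintro x hx y hy rfl
    simp only [List.mem_filter, decide_eq_true_eq] at hy
    exact hy.2 ((hLS x).1 hx)
  · by_cases hv : v ∈ S
    · exact List.mem_append_left _ ((hLS v).2 hv)
    · exact List.mem_append_right _ (List.mem_filter.2 ⟨hM.2 v, by simpa using hv⟩)

end Elimination

section FillIn

variable {G : SimpleGraph V}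

theorem mem_deficiencyFinset {x u v : V} :
    s(u, v) ∈ deficiencyFinset G x ↔ (elimG G x).Adj u v ∧ ¬G.Adj u v := by
  simp only [deficiencyFinset, Finset.mem_image, Finset.mem_filter, Finset.mem_product,
    Finset.mem_univ, true_and, Prod.exists, Sym2.eq_iff]
  constructor
  · rintro ⟨u', v', ⟨hne, hu, hv, hna⟩, ⟨rfl, rfl⟩ | ⟨rfl, rfl⟩⟩
    · exact ⟨⟨hne, hu.ne', hv.ne', Or.inr ⟨hu, hv⟩⟩, hna⟩
    · exact ⟨⟨hne.symm, hv.ne', hu.ne', Or.inr ⟨hv, hu⟩⟩, fun h => hna h.symm⟩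
  · rintro ⟨⟨hne, -, -, h | ⟨hu, hv⟩⟩, hna⟩
    · exact absurd h hna
    · exact ⟨u, v, ⟨hne, hu, hv, hna⟩, Or.inl ⟨rfl, rfl⟩⟩

theorem deficiencyFinset_eq_empty_of_isolated {x : V} (hx : ∀ w, ¬G.Adj x w) :
    deficiencyFinset G x = ∅ := by
  refine Finset.eq_empty_of_forall_notMem fun e he => ?_
  induction e using Sym2.ind with
  | _ u v =>
    obtain ⟨h, hna⟩ := mem_deficiencyFinset.1 he
    rw [elimG_eq_self hx] at h
    exact hna h

theorem deficiencyFinset_subset_pair {x u v : V} (hx : ∀ w, G.Adj x w ↔ w = u ∨ w = v) :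
    deficiencyFinset G x ⊆ {s(u, v)} := by
  intro e he
  induction e using Sym2.ind with
  | _ y z =>
    obtain ⟨⟨hyz, -, -, h | ⟨hy, hz⟩⟩, hna⟩ := mem_deficiencyFinset.1 he
    · exact absurd h hna
    rw [hx] at hy hz
    rw [Finset.mem_singleton]
    rcases hy with rfl | rfl <;> rcases hz with rfl | rfl
    exacts [absurd rfl hyz, rfl, Sym2.eq_swap, absurd rfl hyz]

theorem deficiencyFinset_eq_empty_of_eq_or_adj {x u v : V}
    (hx : ∀ w, G.Adj x w ↔ w = u ∨ w = v) (huv : u = v ∨ G.Adj u v) :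
    deficiencyFinset G x = ∅ := by
  refine Finset.eq_empty_of_forall_notMem fun e he => ?_
  obtain rfl := Finset.mem_singleton.1 (deficiencyFinset_subset_pair hx he)
  obtain ⟨⟨huv', -⟩, hna⟩ := mem_deficiencyFinset.1 he
  exact huv.elim huv' hna

theorem fillList_append (G : SimpleGraph V) (A B : List V) :
    fillList G (A ++ B) = fillList G A + fillList (elimList G A) B := by
  induction A generalizing G with
  | nil => simp [fillList, elimList]
  | cons x xs ih =>
    simp only [List.cons_append, fillList, elimList, ih]
    ring

theorem mem_fillEdges_iff {M : List V} {u v : V} :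
    s(u, v) ∈ fillEdges G M ↔ (fillGraph G M).Adj u v ∧ ¬G.Adj u v := by
  induction M generalizing G with
  | nil =>
    simp only [fillEdges, Finset.notMem_empty, false_iff, not_and, not_not, fillGraph_adj,
      List.prefix_nil]
    rintro ⟨S, rfl, h⟩
    exact h
  | cons x M ih =>
    rw [fillEdges, Finset.mem_union, mem_deficiencyFinset, ih, fillGraph_cons_adj]
    constructor
    · rintro (⟨h, hna⟩ | ⟨h, hna⟩)
      · exact ⟨Or.inr (elimList_le_fillGraph List.nil_prefix h), hna⟩
      · refine ⟨Or.inr h, fun hG => hna (elimG_adj_of_adj hG ?_ ?_)⟩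
        · rintro rfl
          exact not_adj_fillGraph (not_adj_elimG_self u) M h
        · rintro rfl
          exact not_adj_fillGraph (not_adj_elimG_self v) M h.symm
    · rintro ⟨h | h, hna⟩
      · exact absurd h hna
      · by_cases hx : (elimG G x).Adj u v
        exacts [Or.inl ⟨hx, hna⟩, Or.inr ⟨h, hx⟩]

theorem not_mem_of_mem_fillEdges {M : List V} {x : V} {e : Sym2 V} (hx : ∀ w, ¬G.Adj x w)
    (he : e ∈ fillEdges G M) : x ∉ e := by
  induction e using Sym2.ind with
  | _ u v =>
    have h := (mem_fillEdges_iff.1 he).1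
    rw [Sym2.mem_iff]
    rintro (rfl | rfl)
    exacts [not_adj_fillGraph hx M h, not_adj_fillGraph hx M h.symm]

theorem fillList_eq_card_fillEdges (G : SimpleGraph V) (M : List V) :
    fillList G M = (fillEdges G M).card := by
  induction M generalizing G with
  | nil => rfl
  | cons x M ih =>
    rw [fillList, fillEdges, ih, Finset.card_union_of_disjoint]
    refine Finset.disjoint_left.2 fun e he he' => ?_
    induction e using Sym2.ind with
    | _ u v => exact (mem_fillEdges_iff.1 he').2 (mem_deficiencyFinset.1 he).1

theorem fillList_filter_not_mem {S : Set V} (hS : ∀ x ∈ S, ∀ w, ¬G.Adj x w) (M : List V) :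
    fillList G (M.filter fun v => v ∉ S) = fillList G M := by
  induction M generalizing G with
  | nil => rfl
  | cons x M ih =>
    by_cases hx : x ∈ S
    · rw [List.filter_cons_of_neg (by simpa using hx), fillList, elimG_eq_self (hS x hx),
        deficiencyFinset_eq_empty_of_isolated (hS x hx), Finset.card_empty, zero_add, ih hS]
    · rw [List.filter_cons_of_pos (by simpa using hx), fillList, fillList,
        ih fun y hy w => not_adj_elimG (hS y hy)]

theorem fillEdges_deleteSet_subset (S : Set V) (M : List V) :
    fillEdges (deleteSet G S) M ⊆ fillEdges G M := by
  have hle : deleteSet G S ≤ G := fun _ _ h => h.1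
  intro e he
  induction e using Sym2.ind with
  | _ u v =>
    obtain ⟨h, hna⟩ := mem_fillEdges_iff.1 he
    have hu : u ∉ S := fun hu => not_adj_fillGraph (fun _ => not_adj_deleteSet hu) M h
    have hv : v ∉ S := fun hv => not_adj_fillGraph (fun _ => not_adj_deleteSet hv) M h.symm
    exact mem_fillEdges_iff.2 ⟨fillGraph_mono hle M h, fun hG => hna ⟨hG, hu, hv⟩⟩

theorem minFillIn_le {L : List V} (hL : IsOrdering L) : minFillIn G ≤ fillList G L :=
  Nat.sInf_le ⟨L, hL, rfl⟩

theorem exists_isOrdering_fillList_eq_minFillIn (G : SimpleGraph V) :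
    ∃ M : List V, IsOrdering M ∧ fillList G M = minFillIn G :=
  Nat.sInf_mem (s := {n | ∃ L : List V, IsOrdering L ∧ fillList G L = n})
    ⟨_, Finset.univ.toList, ⟨Finset.nodup_toList _, by simp⟩, rfl⟩

end FillIn

theorem exists_eq_append_cons_first {α : Type*} {l : List α} {p : α → Prop}
    (h : ∃ x ∈ l, p x) : ∃ S x R, l = S ++ x :: R ∧ p x ∧ ∀ y ∈ S, ¬p y := by
  classical
  obtain ⟨y, hy, hpy⟩ := h
  obtain ⟨x, hx⟩ := Option.isSome_iff_exists.1
    (List.find?_isSome.2 ⟨y, hy, decide_eq_true hpy⟩ : (l.find? fun x => decide (p x)).isSome)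
  obtain ⟨hpx, S, R, rfl, hS⟩ := List.find?_eq_some_iff_append.1 hx
  exact ⟨S, x, R, rfl, of_decide_eq_true hpx, fun y hy => by simpa using hS y hy⟩

/-- `succAboveNat t` is the increasing enumeration of `ℕ \ {t}`. -/
def succAboveNat (t i : ℕ) : ℕ := if i < t then i else i + 1

theorem succAboveNat_cases (t i : ℕ) :
    (i < t ∧ succAboveNat t i = i) ∨ (t ≤ i ∧ succAboveNat t i = i + 1) := by
  unfold succAboveNat
  split_ifs <;> omega

section Cycles

omit [Fintype V]

structure IsCycleOn (H : SimpleGraph V) (n : ℕ) (c : ℕ → V) : Prop where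
  injOn : ∀ i j, i < n → j < n → c i = c j → i = j
  adj : ∀ i j, i < n → j < n → j = i + 1 ∨ (i = n - 1 ∧ j = 0) → H.Adj (c i) (c j)

/-- The edges of `H` between non-consecutive vertices of the cycle `c 0, …, c (n - 1)`. -/
noncomputable def chords (H : SimpleGraph V) (n : ℕ) (c : ℕ → V) : Finset (Sym2 V) :=
  ((Finset.range n ×ˢ Finset.range n).filter fun p =>
      p.1 + 2 ≤ p.2 ∧ ¬(p.1 = 0 ∧ p.2 = n - 1) ∧ H.Adj (c p.1) (c p.2)).image
    fun p => s(c p.1, c p.2)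

theorem mem_chords {H : SimpleGraph V} {n : ℕ} {c : ℕ → V} {e : Sym2 V} :
    e ∈ chords H n c ↔ ∃ i j, i + 2 ≤ j ∧ j < n ∧ ¬(i = 0 ∧ j = n - 1) ∧
      H.Adj (c i) (c j) ∧ s(c i, c j) = e := by
  simp only [chords, Finset.mem_image, Finset.mem_filter, Finset.mem_product, Finset.mem_range,
    Prod.exists]
  constructor
  · rintro ⟨i, j, ⟨⟨-, hj⟩, h⟩, rfl⟩
    exact ⟨i, j, h.1, hj, h.2.1, h.2.2, rfl⟩
  · rintro ⟨i, j, h₁, h₂, h₃, h₄, rfl⟩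
    exact ⟨i, j, ⟨⟨by omega, h₂⟩, h₁, h₃, h₄⟩, rfl⟩

omit [DecidableEq V] in
theorem IsCycleOn.comp_succAboveNat {G H : SimpleGraph V} {n i₀ p q : ℕ} {c : ℕ → V}
    (hc : IsCycleOn G (n + 1) c) (hi₀ : i₀ ≤ n)
    (hp : (i₀ = 0 ∧ p = n) ∨ (0 < i₀ ∧ p = i₀ - 1)) (hq : (i₀ = n ∧ q = 0) ∨ (i₀ < n ∧ q = i₀ + 1))
    (hkeep : ∀ i j, i ≤ n → j ≤ n → i ≠ i₀ → j ≠ i₀ → G.Adj (c i) (c j) → H.Adj (c i) (c j))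
    (hpq : H.Adj (c p) (c q)) : IsCycleOn H n (c ∘ succAboveNat i₀) := by
  have hsa := succAboveNat_cases i₀
  refine ⟨fun t t' ht ht' h => ?_, fun t t' ht ht' htt' => ?_⟩
  · have := hc.injOn _ _ (by rcases hsa t with h | h <;> omega)
      (by rcases hsa t' with h | h <;> omega) h
    rcases hsa t with h | h <;> rcases hsa t' with h' | h' <;> omega
  · by_cases hb : succAboveNat i₀ t = p ∧ succAboveNat i₀ t' = q
    · simpa only [Function.comp_apply, hb] using hpq
    · refine hkeep _ _ (by rcases hsa t with h | h <;> omega)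
        (by rcases hsa t' with h | h <;> omega) (by rcases hsa t with h | h <;> omega)
        (by rcases hsa t' with h | h <;> omega) (hc.adj _ _ ?_ ?_ ?_) <;>
      rcases hsa t with h | h <;> rcases hsa t' with h' | h' <;> omega

/-- The neighbours `c p` and `c q` of the dropped vertex `c i₀` span a chord of the long cycle
but an edge of the short one. -/
theorem card_chords_comp_succAboveNat_lt {H H' : SimpleGraph V} {n i₀ p q : ℕ} {c : ℕ → V}
    (hinj : ∀ i j, i ≤ n → j ≤ n → c i = c j → i = j) (hn : 3 ≤ n) (hi₀ : i₀ ≤ n)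
    (hp : (i₀ = 0 ∧ p = n) ∨ (0 < i₀ ∧ p = i₀ - 1)) (hq : (i₀ = n ∧ q = 0) ∨ (i₀ < n ∧ q = i₀ + 1))
    (hle : H ≤ H') (hpq : H'.Adj (c p) (c q)) :
    (chords H n (c ∘ succAboveNat i₀)).card < (chords H' (n + 1) c).card := by
  have hsa := succAboveNat_cases i₀
  have hsub : insert s(c p, c q) (chords H n (c ∘ succAboveNat i₀)) ⊆ chords H' (n + 1) c := by
    intro e he
    rcases Finset.mem_insert.1 he with rfl | he
    · rcases Nat.lt_or_gt_of_ne (show p ≠ q by omega) with h | h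
      · exact mem_chords.2 ⟨p, q, by omega, by omega, by omega, hpq, rfl⟩
      · exact mem_chords.2 ⟨q, p, by omega, by omega, by omega, hpq.symm, Sym2.eq_swap⟩
    · obtain ⟨t₁, t₂, h₁, h₂, h₃, hadj, rfl⟩ := mem_chords.1 he
      refine mem_chords.2 ⟨_, _, ?_, ?_, ?_, hle hadj, rfl⟩ <;>
        rcases hsa t₁ with h | h <;> rcases hsa t₂ with h' | h' <;> omega
  have hnew : s(c p, c q) ∉ chords H n (c ∘ succAboveNat i₀) := by
    intro h
    obtain ⟨t₁, t₂, h₁, h₂, h₃, -, he⟩ := mem_chords.1 h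
    have hlt₁ : succAboveNat i₀ t₁ ≤ n := by rcases hsa t₁ with h | h <;> omega
    have hlt₂ : succAboveNat i₀ t₂ ≤ n := by rcases hsa t₂ with h | h <;> omega
    rcases Sym2.eq_iff.1 he with ⟨e₁, e₂⟩ | ⟨e₁, e₂⟩ <;>
      have := hinj _ _ hlt₁ (by omega) e₁ <;> have := hinj _ _ hlt₂ (by omega) e₂ <;>
      rcases hsa t₁ with h | h <;> rcases hsa t₂ with h' | h' <;> omega
  calc (chords H n (c ∘ succAboveNat i₀)).card
      < (insert s(c p, c q) (chords H n (c ∘ succAboveNat i₀))).card := by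
        rw [Finset.card_insert_of_notMem hnew]
        exact Nat.lt_succ_self _
    _ ≤ (chords H' (n + 1) c).card := Finset.card_le_card hsub

/-- The first cycle vertex to be eliminated makes its two cycle neighbours adjacent: this edge is
a chord, and it closes up a cycle of length `n - 1` in the remaining elimination graph. -/
theorem card_chords_fillGraph (n : ℕ) :
    ∀ (G : SimpleGraph V) (M : List V) (c : ℕ → V), IsCycleOn G n c → (∀ i < n, c i ∈ M) →
      n - 3 ≤ (chords (fillGraph G M) n c).card := by
  induction n with
  | zero => simp
  | succ n ih =>
  intro G M c hc hM
  rcases Nat.lt_or_ge n 3 with hn | hn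
  · omega
  obtain ⟨S, _, M₂, rfl, ⟨i₀, hi₀, rfl⟩, hS⟩ := exists_eq_append_cons_first
    (p := fun y => ∃ i < n + 1, c i = y) ⟨c 0, hM 0 (by omega), 0, by omega, rfl⟩
  have hcS : ∀ i < n + 1, c i ∉ S := fun i hi hmem => hS _ hmem ⟨i, hi, rfl⟩
  have hne : ∀ i j, i < n + 1 → j < n + 1 → i ≠ j → c i ≠ c j :=
    fun i j hi hj hij h => hij (hc.injOn i j hi hj h)
  set H := elimList G (S ++ [c i₀]) with hH
  have hkeep : ∀ i j, i ≤ n → j ≤ n → i ≠ i₀ → j ≠ i₀ → G.Adj (c i) (c j) →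
      H.Adj (c i) (c j) := by
    intro i j hi hj hii₀ hji₀ h
    refine elimList_adj_of_adj h ?_ ?_ <;> simp only [List.mem_append, List.mem_singleton, not_or]
    exacts [⟨hcS i (by omega), hne i i₀ (by omega) hi₀ hii₀⟩,
      ⟨hcS j (by omega), hne j i₀ (by omega) hi₀ hji₀⟩]
  obtain ⟨p, q, hp, hq⟩ : ∃ p q, ((i₀ = 0 ∧ p = n) ∨ (0 < i₀ ∧ p = i₀ - 1)) ∧
      ((i₀ = n ∧ q = 0) ∨ (i₀ < n ∧ q = i₀ + 1)) :=
    ⟨if i₀ = 0 then n else i₀ - 1, if i₀ = n then 0 else i₀ + 1,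
      by split_ifs <;> omega, by split_ifs <;> omega⟩
  have hpq : H.Adj (c p) (c q) := by
    have hp' := elimList_adj_of_adj (hc.adj p i₀ (by omega) hi₀ (by omega)).symm
      (hcS i₀ hi₀) (hcS p (by omega))
    have hq' := elimList_adj_of_adj (hc.adj i₀ q hi₀ (by omega) (by omega))
      (hcS i₀ hi₀) (hcS q (by omega))
    rw [hH, elimList_append]
    exact ⟨hne p q (by omega) (by omega) (by omega), hne p i₀ (by omega) hi₀ (by omega),
      hne q i₀ (by omega) hi₀ (by omega), Or.inr ⟨hp', hq'⟩⟩
  have hM₂ : ∀ t < n, c (succAboveNat i₀ t) ∈ M₂ := by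
    intro t ht
    have hlt : succAboveNat i₀ t < n + 1 := by rcases succAboveNat_cases i₀ t with h | h <;> omega
    have hti₀ : succAboveNat i₀ t ≠ i₀ := by rcases succAboveNat_cases i₀ t with h | h <;> omega
    simpa [hcS _ hlt, hne _ _ hlt hi₀ hti₀] using hM _ hlt
  have hle : fillGraph H M₂ ≤ fillGraph G (S ++ c i₀ :: M₂) := by
    simpa using fillGraph_elimList_le (G := G) (S ++ [c i₀]) M₂
  have := ih H M₂ _ (hc.comp_succAboveNat (by omega) hp hq hkeep hpq) hM₂
  have := card_chords_comp_succAboveNat_lt (fun i j hi hj => hc.injOn i j (by omega) (by omega))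
    hn (by omega) hp hq hle (elimList_le_fillGraph ⟨M₂, by simp⟩ hpq)
  omega

end Cycles

/-- The length of the cycle `a 0, a 1, …, a (k + 1)`, in which `a (k + 1)` may equal `a 0`. -/
def pathCycleLength (k : ℕ) (a : ℕ → V) : ℕ := if a 0 = a (k + 1) then k + 1 else k + 2

section

omit [Fintype V]

theorem pathCycleLength_cases (k : ℕ) (a : ℕ → V) :
    (a 0 = a (k + 1) ∧ pathCycleLength k a = k + 1) ∨
      (a 0 ≠ a (k + 1) ∧ pathCycleLength k a = k + 2) := by
  unfold pathCycleLength
  split_ifs with he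
  exacts [Or.inl ⟨he, rfl⟩, Or.inr ⟨he, rfl⟩]

theorem pathCycleLength_succAboveNat {k : ℕ} {a : ℕ → V} {t : ℕ} (ht : 1 ≤ t) (htk : t ≤ k + 1) :
    pathCycleLength k (a ∘ succAboveNat t) = pathCycleLength (k + 1) a - 1 := by
  have h₀ : succAboveNat t 0 = 0 := if_pos (by omega)
  have hk : succAboveNat t (k + 1) = k + 2 := if_neg (by omega)
  simp only [pathCycleLength, Function.comp_apply, h₀, hk]
  split_ifs <;> omega

omit [DecidableEq V] in
theorem image_Icc_succAboveNat {k : ℕ} (a : ℕ → V) {t : ℕ} (ht : 1 ≤ t) (htk : t ≤ k + 1) :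
    a '' Set.Icc 1 (k + 1) = insert (a t) ((a ∘ succAboveNat t) '' Set.Icc 1 k) := by
  ext x
  simp only [Set.mem_image, Set.mem_insert_iff, Set.mem_Icc, Function.comp_apply]
  constructor
  · rintro ⟨m, hm, rfl⟩
    rcases Nat.lt_trichotomy m t with hmt | rfl | hmt
    · exact Or.inr ⟨m, by omega, by rw [succAboveNat, if_pos hmt]⟩
    · exact Or.inl rfl
    · refine Or.inr ⟨m - 1, by omega, ?_⟩
      rw [succAboveNat, if_neg (by omega), Nat.sub_add_cancel (by omega)]
  · rintro (rfl | ⟨i, hi, rfl⟩)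
    · exact ⟨t, ⟨ht, htk⟩, rfl⟩
    · exact ⟨_, by rcases succAboveNat_cases t i with h | h <;> omega, rfl⟩

end

/-- `a 1, …, a k` is an induced path of degree-two vertices of `G`, attached to the rest of `G`
at `a 0` and `a (k + 1)`. -/
structure IsDegTwoPath (G : SimpleGraph V) (k : ℕ) (a : ℕ → V) : Prop where
  injOn : ∀ i j, 1 ≤ i → i ≤ k → 1 ≤ j → j ≤ k → a i = a j → i = j
  ne_ends : ∀ i, 1 ≤ i → i ≤ k → a i ≠ a 0 ∧ a i ≠ a (k + 1)
  adj_iff : ∀ i, 1 ≤ i → i ≤ k → ∀ w, G.Adj (a i) w ↔ w = a (i - 1) ∨ w = a (i + 1)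

namespace IsDegTwoPath

variable {G : SimpleGraph V} {k : ℕ} {a : ℕ → V}

section

omit [Fintype V] [DecidableEq V]

theorem eq_of_apply_eq (h : IsDegTwoPath G k a) {i j : ℕ} (hi : 1 ≤ i) (hik : i ≤ k)
    (hj : j ≤ k + 1) (he : a i = a j) : i = j := by
  rcases Nat.eq_zero_or_pos j with rfl | hj₀
  · exact absurd he (h.ne_ends i hi hik).1
  rcases Nat.lt_or_ge j (k + 1) with hjk | hjk
  · exact h.injOn i j hi hik hj₀ (by omega) he
  · obtain rfl : j = k + 1 := by omega
    exact absurd he (h.ne_ends i hi hik).2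

theorem adj_pred (h : IsDegTwoPath G k a) {i : ℕ} (hi : 1 ≤ i) (hik : i ≤ k) :
    G.Adj (a i) (a (i - 1)) :=
  (h.adj_iff i hi hik _).2 (Or.inl rfl)

theorem adj_succ (h : IsDegTwoPath G k a) {i : ℕ} (hi : 1 ≤ i) (hik : i ≤ k) :
    G.Adj (a i) (a (i + 1)) :=
  (h.adj_iff i hi hik _).2 (Or.inr rfl)

theorem elimG_adj_iff (h : IsDegTwoPath G k a) {t j : ℕ} (ht : 1 ≤ t) (htk : t ≤ k)
    (hj : 1 ≤ j) (hjk : j ≤ k) (hjt : j ≠ t) (w : V) :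
    (elimG G (a t)).Adj (a j) w ↔
      w = a (if j = t + 1 then t - 1 else j - 1) ∨ w = a (if j + 1 = t then t + 1 else j + 1) := by
  have hne : ∀ m m', 1 ≤ m → m ≤ k → m' ≤ k + 1 → m ≠ m' → a m ≠ a m' :=
    fun m m' hm hmk hm' hmm' he => hmm' (h.eq_of_apply_eq hm hmk hm' he)
  rcases (by omega : (j + 1 < t ∨ t + 1 < j) ∨ j + 1 = t ∨ j = t + 1) with hjt' | rfl | rfl
  · have hnadj : ¬G.Adj (a t) (a j) := by
      rw [h.adj_iff t ht htk]
      rintro (he | he) <;> exact hne j _ hj hjk (by omega) (by omega) he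
    rw [elimG_adj_iff_of_not_adj hnadj (hne j t hj hjk (by omega) hjt), h.adj_iff j hj hjk,
      if_neg (by omega), if_neg (by omega)]
    refine ⟨And.left, fun hw => ⟨hw, ?_⟩⟩
    rcases hw with rfl | rfl <;> exact (hne t _ ht htk (by omega) (by omega)).symm
  · have hadj : G.Adj (a (j + 1)) (a j) := by simpa using h.adj_pred ht htk
    rw [elimG_adj_iff_of_adj hadj, h.adj_iff j hj hjk, h.adj_iff _ ht htk,
      if_neg (by omega), if_pos rfl, Nat.add_sub_cancel]
    constructor
    · rintro ⟨hjw, hwt, (rfl | rfl) | (rfl | rfl)⟩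
      exacts [Or.inl rfl, absurd rfl hwt, absurd rfl hjw, Or.inr rfl]
    · rintro (rfl | rfl)
      · exact ⟨(h.adj_pred hj hjk).ne, (hne _ _ ht htk (by omega) (by omega)).symm,
          Or.inl (Or.inl rfl)⟩
      · exact ⟨hne _ _ hj hjk (by omega) (by omega), (hne _ _ ht htk (by omega) (by omega)).symm,
          Or.inr (Or.inr rfl)⟩
  · rw [elimG_adj_iff_of_adj (h.adj_succ ht htk), h.adj_iff _ hj hjk, h.adj_iff _ ht htk,
      if_pos rfl, if_neg (by omega), Nat.add_sub_cancel]
    constructor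
    · rintro ⟨hjw, hwt, (rfl | rfl) | (rfl | rfl)⟩
      exacts [absurd rfl hwt, Or.inr rfl, Or.inl rfl, absurd rfl hjw]
    · rintro (rfl | rfl)
      · exact ⟨hne _ _ hj hjk (by omega) (by omega), (hne _ _ ht htk (by omega) (by omega)).symm,
          Or.inr (Or.inl rfl)⟩
      · exact ⟨(h.adj_succ hj hjk).ne, (hne _ _ ht htk (by omega) (by omega)).symm,
          Or.inl (Or.inr rfl)⟩

theorem elimG_succAboveNat (h : IsDegTwoPath G (k + 1) a) {t : ℕ} (ht : 1 ≤ t)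
    (htk : t ≤ k + 1) : IsDegTwoPath (elimG G (a t)) k (a ∘ succAboveNat t) where
  injOn i j hi hik hj hjk he := by
    have hsi := succAboveNat_cases t i
    have hsj := succAboveNat_cases t j
    have := h.injOn _ _ (by omega) (by omega) (by omega) (by omega) he
    omega
  ne_ends i hi hik := by
    have hsi := succAboveNat_cases t i
    have h₀ : succAboveNat t 0 = 0 := if_pos (by omega)
    have hk : succAboveNat t (k + 1) = k + 2 := if_neg (by omega)
    simp only [Function.comp_apply, h₀, hk]
    exact h.ne_ends _ (by omega) (by omega)
  adj_iff i hi hik w := by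
    have hsi := succAboveNat_cases t i
    have hsp := succAboveNat_cases t (i - 1)
    have hss := succAboveNat_cases t (i + 1)
    simp only [Function.comp_apply]
    rw [h.elimG_adj_iff ht htk (by omega) (by omega) (by omega) w]
    rw [show (if succAboveNat t i = t + 1 then t - 1 else succAboveNat t i - 1) =
        succAboveNat t (i - 1) by split_ifs <;> omega,
      show (if succAboveNat t i + 1 = t then t + 1 else succAboveNat t i + 1) =
        succAboveNat t (i + 1) by split_ifs <;> omega]

theorem apply_not_mem_image_succAboveNat (h : IsDegTwoPath G (k + 1) a) {t : ℕ} (ht : 1 ≤ t)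
    (htk : t ≤ k + 1) : a t ∉ (a ∘ succAboveNat t) '' Set.Icc 1 k := by
  rintro ⟨i, ⟨hi, hik⟩, he⟩
  have hsi := succAboveNat_cases t i
  have := h.eq_of_apply_eq ht htk (j := succAboveNat t i) (by omega) he.symm
  omega

theorem eq_end_of_adj (h : IsDegTwoPath G k a) {t : ℕ} (ht : 1 ≤ t) (htk : t ≤ k) {u : V}
    (hu : G.Adj (a t) u) (huP : u ∉ a '' Set.Icc 1 k) : u = a 0 ∨ u = a (k + 1) := by
  rcases (h.adj_iff t ht htk u).1 hu with rfl | rfl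
  · refine Or.inl (congrArg a ?_)
    by_contra
    exact huP ⟨t - 1, ⟨by omega, by omega⟩, rfl⟩
  · refine Or.inr (congrArg a ?_)
    by_contra
    exact huP ⟨t + 1, ⟨by omega, by omega⟩, rfl⟩

theorem deleteSet_elimG (h : IsDegTwoPath G (k + 1) a)
    (hclosed : a 0 = a (k + 2) ∨ G.Adj (a 0) (a (k + 2))) {t : ℕ} (ht : 1 ≤ t)
    (htk : t ≤ k + 1) :
    deleteSet (elimG G (a t)) ((a ∘ succAboveNat t) '' Set.Icc 1 k) =
      deleteSet G (a '' Set.Icc 1 (k + 1)) := by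
  have hP : ∀ x, x ∉ a '' Set.Icc 1 (k + 1) ↔ x ≠ a t ∧ x ∉ (a ∘ succAboveNat t) '' Set.Icc 1 k :=
    fun x => by rw [image_Icc_succAboveNat a ht htk, Set.mem_insert_iff, not_or]
  ext u v
  rw [deleteSet_adj, deleteSet_adj, hP, hP]
  constructor
  · rintro ⟨⟨huv, hut, hvt, hG | ⟨htu, htv⟩⟩, hu, hv⟩
    · exact ⟨hG, ⟨hut, hu⟩, hvt, hv⟩
    refine ⟨?_, ⟨hut, hu⟩, hvt, hv⟩
    rcases h.eq_end_of_adj ht htk htu ((hP u).2 ⟨hut, hu⟩) with rfl | rfl <;>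
      rcases h.eq_end_of_adj ht htk htv ((hP v).2 ⟨hvt, hv⟩) with rfl | rfl
    exacts [absurd rfl huv, hclosed.resolve_left huv, (hclosed.resolve_left huv.symm).symm,
      absurd rfl huv]
  · rintro ⟨hG, ⟨hut, hu⟩, hvt, hv⟩
    exact ⟨elimG_adj_of_adj hG hut hvt, hu, hv⟩

end

section

omit [Fintype V]

theorem adj_or_eq_of_pathCycleLength_le_three (h : IsDegTwoPath G k a)
    (hclosed : a 0 = a (k + 1) ∨ G.Adj (a 0) (a (k + 1))) {t : ℕ} (ht : 1 ≤ t) (htk : t ≤ k)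
    (hlen : pathCycleLength k a ≤ 3) : a (t - 1) = a (t + 1) ∨ G.Adj (a (t - 1)) (a (t + 1)) := by
  have hk : k ≤ 2 := by unfold pathCycleLength at hlen; split_ifs at hlen <;> omega
  interval_cases k <;> interval_cases t
  · simpa using hclosed
  all_goals
    have he : a 0 = a 3 := by
      by_contra he
      simp [pathCycleLength, he] at hlen
  · right
    show G.Adj (a 0) (a 2)
    rw [he]
    exact (h.adj_succ (i := 2) (by omega) le_rfl).symm
  · right
    show G.Adj (a 1) (a 3)
    rw [← he]
    exact h.adj_pred (i := 1) le_rfl (by omega)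

theorem isCycleOn (h : IsDegTwoPath G k a) (hclosed : a 0 = a (k + 1) ∨ G.Adj (a 0) (a (k + 1)))
    (hk : 1 ≤ k) : IsCycleOn G (pathCycleLength k a) a := by
  have hlen := pathCycleLength_cases k a
  have hne : ∀ i j, i < j → j < pathCycleLength k a → a i ≠ a j := by
    intro i j hij hj he
    rcases Nat.lt_or_ge j (k + 1) with hjk | hjk
    · exact absurd (h.eq_of_apply_eq (by omega) (by omega) (by omega) he.symm) (by omega)
    · obtain rfl : j = k + 1 := by omega
      rcases Nat.eq_zero_or_pos i with rfl | hi
      · rcases hlen with ⟨-, hlen⟩ | ⟨hne, -⟩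
        exacts [by omega, hne he]
      · exact (h.ne_ends i hi (by omega)).2 he
  refine ⟨fun i j hi hj he => ?_, fun i j hi hj hij => ?_⟩
  · rcases Nat.lt_trichotomy i j with hij | rfl | hij
    exacts [absurd he (hne i j hij hj), rfl, absurd he.symm (hne j i hij hi)]
  rcases hij with rfl | ⟨rfl, rfl⟩
  · rcases Nat.eq_zero_or_pos i with rfl | hi
    · exact (h.adj_pred le_rfl hk).symm
    · exact h.adj_succ hi (by omega)
  · rcases hlen with ⟨he, hlen⟩ | ⟨he, hlen⟩ <;> rw [hlen]
    · rw [he]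
      exact h.adj_succ hk le_rfl
    · exact (hclosed.resolve_left he).symm

theorem not_adj_of_chord (h : IsDegTwoPath G k a)
    (hclosed : a 0 = a (k + 1) ∨ G.Adj (a 0) (a (k + 1))) {i j : ℕ} (hij : i + 2 ≤ j)
    (hj : j < pathCycleLength k a) (hchord : ¬(i = 0 ∧ j = pathCycleLength k a - 1)) :
    ¬G.Adj (a i) (a j) := by
  have hlen := pathCycleLength_cases k a
  have hinj := (h.isCycleOn hclosed (by omega)).injOn
  intro hadj
  rcases Nat.eq_zero_or_pos i with rfl | hi
  · rw [← G.adj_comm, h.adj_iff j (by omega) (by omega)] at hadj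
    rcases hadj with he | he
    · have := hinj _ _ (by omega) (by omega) he
      omega
    · have := hinj _ _ (by omega) (by omega) he
      omega
  · rw [h.adj_iff i hi (by omega)] at hadj
    rcases hadj with he | he
    · have := hinj _ _ hj (by omega) he
      omega
    · have := hinj _ _ hj (by omega) he
      omega

end

/-- Eliminating the path vertices in any order: each step shortens the path by one vertex and
adds at most one fill edge, and none once the remaining cycle is a triangle. -/
theorem elimList_eq_deleteSet_and_fillList_le (h : IsDegTwoPath G k a)
    (hclosed : a 0 = a (k + 1) ∨ G.Adj (a 0) (a (k + 1))) {L : List V} (hnd : L.Nodup)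
    (hL : ∀ x, x ∈ L ↔ x ∈ a '' Set.Icc 1 k) :
    elimList G L = deleteSet G (a '' Set.Icc 1 k) ∧ fillList G L ≤ pathCycleLength k a - 3 := by
  induction L generalizing k a G with
  | nil =>
    obtain rfl : k = 0 := by
      by_contra hk
      exact List.not_mem_nil ((hL (a 1)).2 ⟨1, ⟨le_rfl, by omega⟩, rfl⟩)
    refine ⟨?_, Nat.zero_le _⟩
    ext u v
    simp [elimList, deleteSet_adj]
  | cons x L ih =>
    obtain ⟨t, ⟨ht, htk⟩, rfl⟩ := (hL x).1 List.mem_cons_self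
    obtain ⟨k, rfl⟩ : ∃ k', k = k' + 1 := ⟨k - 1, by omega⟩
    have h₀ : succAboveNat t 0 = 0 := if_pos (by omega)
    have hk : succAboveNat t (k + 1) = k + 2 := if_neg (by omega)
    have hclosed' : (a ∘ succAboveNat t) 0 = (a ∘ succAboveNat t) (k + 1) ∨
        (elimG G (a t)).Adj ((a ∘ succAboveNat t) 0) ((a ∘ succAboveNat t) (k + 1)) := by
      simp only [Function.comp_apply, h₀, hk]
      exact hclosed.imp_right fun hadj =>
        elimG_adj_of_adj hadj (h.ne_ends t ht htk).1.symm (h.ne_ends t ht htk).2.symm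
    have hL' : ∀ y, y ∈ L ↔ y ∈ (a ∘ succAboveNat t) '' Set.Icc 1 k := by
      intro y
      have hy := hL y
      rw [List.mem_cons, image_Icc_succAboveNat a ht htk, Set.mem_insert_iff] at hy
      constructor
      · intro hyL
        exact (hy.1 (Or.inr hyL)).resolve_left fun he => (List.nodup_cons.1 hnd).1 (he ▸ hyL)
      · intro hyP
        exact (hy.2 (Or.inr hyP)).resolve_left fun he =>
          h.apply_not_mem_image_succAboveNat ht htk (he ▸ hyP)
    obtain ⟨hE, hF⟩ := ih (h.elimG_succAboveNat ht htk) hclosed' (List.nodup_cons.1 hnd).2 hL'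
    rw [pathCycleLength_succAboveNat ht htk] at hF
    refine ⟨by rw [elimList, hE, h.deleteSet_elimG hclosed ht htk], ?_⟩
    have hnbr := h.adj_iff t ht htk
    have hdef := Finset.card_le_card (deficiencyFinset_subset_pair hnbr)
    rw [Finset.card_singleton] at hdef
    rw [fillList]
    rcases Nat.lt_or_ge 3 (pathCycleLength (k + 1) a) with hlen | hlen
    · omega
    · rw [deficiencyFinset_eq_empty_of_eq_or_adj hnbr
        (h.adj_or_eq_of_pathCycleLength_le_three hclosed ht htk hlen), Finset.card_empty]
      omega

theorem pathCycleLength_sub_three_add_fillList_le (h : IsDegTwoPath G k a)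
    (hclosed : a 0 = a (k + 1) ∨ G.Adj (a 0) (a (k + 1))) {M : List V} (hM : ∀ v, v ∈ M) :
    pathCycleLength k a - 3 + fillList (deleteSet G (a '' Set.Icc 1 k)) M ≤ fillList G M := by
  set n := pathCycleLength k a
  set P := a '' Set.Icc 1 k
  rw [fillList_eq_card_fillEdges, fillList_eq_card_fillEdges]
  have hF := fillEdges_deleteSet_subset (G := G) P M
  rcases Nat.lt_or_ge n 4 with hn | hn
  · have := Finset.card_le_card hF
    omega
  have hlen := pathCycleLength_cases k a
  set C := chords (fillGraph G M) n a
  have hC : n - 3 ≤ C.card :=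
    card_chords_fillGraph n G M a (h.isCycleOn hclosed (by omega)) fun i _ => hM _
  have hCsub : C ⊆ fillEdges G M := fun e he => by
    obtain ⟨i, j, h₁, h₂, h₃, hadj, rfl⟩ := mem_chords.1 he
    exact mem_fillEdges_iff.2 ⟨hadj, h.not_adj_of_chord hclosed h₁ h₂ h₃⟩
  have hdisj : Disjoint C (fillEdges (deleteSet G P) M) := by
    refine Finset.disjoint_left.2 fun e he he' => ?_
    obtain ⟨i, j, h₁, h₂, h₃, -, rfl⟩ := mem_chords.1 he
    rcases Nat.eq_zero_or_pos i with rfl | hi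
    · have hj : a j ∈ P := ⟨j, ⟨by omega, by omega⟩, rfl⟩
      exact not_mem_of_mem_fillEdges (fun _ => not_adj_deleteSet hj) he' (Sym2.mem_mk_right _ _)
    · have hi : a i ∈ P := ⟨i, ⟨hi, by omega⟩, rfl⟩
      exact not_mem_of_mem_fillEdges (fun _ => not_adj_deleteSet hi) he' (Sym2.mem_mk_left _ _)
  have := Finset.card_le_card (Finset.union_subset hCsub hF)
  rw [Finset.card_union_of_disjoint hdisj] at this
  omega

end IsDegTwoPath

theorem stmt_14_general (G : SimpleGraph V) (k : ℕ) (a : ℕ → V)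
    (hinj : ∀ i j : ℕ, 1 ≤ i → i ≤ k → 1 ≤ j → j ≤ k → a i = a j → i = j)
    (hends : ∀ i : ℕ, 1 ≤ i → i ≤ k → a i ≠ a 0 ∧ a i ≠ a (k + 1))
    (hdeg : ∀ i : ℕ, 1 ≤ i → i ≤ k →
      G.neighborSet (a i) = {a (i - 1), a (i + 1)})
    (hcase : a 0 = a (k + 1) ∨ G.Adj (a 0) (a (k + 1))) :
    ∀ L : List V, L.Perm ((List.range k).map (fun i => a (i + 1))) →
      ∃ L' : List V, IsOrdering (L ++ L') ∧ fillList G (L ++ L') = minFillIn G := by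
  intro L hL
  have h : IsDegTwoPath G k a :=
    ⟨hinj, hends, fun i hi hik w => by rw [← mem_neighborSet, hdeg i hi hik]; rfl⟩
  set P := a '' Set.Icc 1 k
  have hLP : ∀ x, x ∈ L ↔ x ∈ P := fun x => by
    rw [hL.mem_iff]
    simp only [List.mem_map, List.mem_range, P, Set.mem_image, Set.mem_Icc]
    exact ⟨fun ⟨i, hi, he⟩ => ⟨i + 1, ⟨by omega, by omega⟩, he⟩,
      fun ⟨i, hi, he⟩ => ⟨i - 1, by omega, by rwa [Nat.sub_add_cancel hi.1]⟩⟩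
  have hnd : L.Nodup := hL.nodup_iff.2 <| List.nodup_range.map_on fun i hi j hj he => by
    simp only [List.mem_range] at hi hj
    have := hinj _ _ (by omega) (by omega) (by omega) (by omega) he
    omega
  obtain ⟨M, hM, hMmin⟩ := exists_isOrdering_fillList_eq_minFillIn G
  obtain ⟨hE, hF⟩ := h.elimList_eq_deleteSet_and_fillList_le hcase hnd hLP
  have hord := hM.append_filter_not_mem hnd hLP
  refine ⟨_, hord, le_antisymm ?_ (minFillIn_le hord)⟩
  calc fillList G (L ++ M.filter fun v => v ∉ P)
      = fillList G L + fillList (deleteSet G P) M := by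
        rw [fillList_append, hE, fillList_filter_not_mem fun _ hx _ => not_adj_deleteSet hx]
    _ ≤ pathCycleLength k a - 3 + fillList (deleteSet G P) M := by omega
    _ ≤ fillList G M := h.pathCycleLength_sub_three_add_fillList_le hcase hM.2
    _ = minFillIn G := hMmin

/-- let `a 1, …, a k` induce a path of degree-2 vertices with outside
neighbors `a 0` and `a (k+1)`. If `a 0 = a (k+1)` or they are adjacent (so the path
closes into a cycle), then eliminating the path vertices first, in any order,
extends to a minimum fill-in ordering of `G`. -/
theorem stmt_14 (G : SimpleGraph V) (k : ℕ) (hk : 1 ≤ k) (a : ℕ → V)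
    (hinj : ∀ i j : ℕ, 1 ≤ i → i ≤ k → 1 ≤ j → j ≤ k → a i = a j → i = j)
    (hends : ∀ i : ℕ, 1 ≤ i → i ≤ k → a i ≠ a 0 ∧ a i ≠ a (k + 1))
    (hdeg : ∀ i : ℕ, 1 ≤ i → i ≤ k →
      G.neighborSet (a i) = {a (i - 1), a (i + 1)})
    (hcase : a 0 = a (k + 1) ∨ G.Adj (a 0) (a (k + 1))) :
    ∀ L : List V, L.Perm ((List.range k).map (fun i => a (i + 1))) →
      ∃ L' : List V, IsOrdering (L ++ L') ∧ fillList G (L ++ L') = minFillIn G :=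
  stmt_14_general G k a hinj hends hdeg hcase
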